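/- For every Boolean matrix I, the Boolean rank of I is at most the Boolean rank of its essential part: rank_B(I) ≤ rank_B(E(I)). -/

import Mathlib

/-- `C↑`: attributes shared by all objects in `C`. -/
def up {n m : ℕ} (I : Fin n → Fin m → Bool) (C : Finset (Fin n)) : Finset (Fin m) :=
  Finset.univ.filter fun j => ∀ i ∈ C, I i j = true

/-- `D↓`: objects sharing all attributes in `D`. -/
def dn {n m : ℕ} (I : Fin n → Fin m → Bool) (D : Finset (Fin m)) : Finset (Fin n) :=
  Finset.univ.filter fun i => ∀ j ∈ D, I i j = true

/-- A formal concept of `I`: a pair `⟨C,D⟩` with `C↑ = D` and `D↓ = C`. -/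
def isConcept {n m : ℕ} (I : Fin n → Fin m → Bool)
    (p : Finset (Fin n) × Finset (Fin m)) : Prop :=
  up I p.1 = p.2 ∧ dn I p.2 = p.1

/-- The interval `[γ(C), μ(D)]` in the concept lattice of `I`
(concepts ordered by extent inclusion). -/
def interval {n m : ℕ} (I : Fin n → Fin m → Bool)
    (C : Finset (Fin n)) (D : Finset (Fin m)) :
    Set (Finset (Fin n) × Finset (Fin m)) :=
  {p | isConcept I p ∧ dn I (up I C) ⊆ p.1 ∧ p.1 ⊆ dn I D}

/-- The Boolean matrix `A_F ∘ B_F` determined by a set `F` of concepts: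
entry `(i,j)` is 1 iff some concept in `F` covers `(i,j)`. -/
def cov {n m : ℕ} (F : Finset (Finset (Fin n) × Finset (Fin m))) :
    Fin n → Fin m → Bool :=
  fun i j => decide (∃ p ∈ F, i ∈ p.1 ∧ j ∈ p.2)

/-- The essential part `E(I)`: entry `(i,j)` is 1 iff the interval `I_{ij}` is
non-empty and inclusion-minimal among the non-empty intervals `I_{i'j'}`. -/
noncomputable def Ess {n m : ℕ} (I : Fin n → Fin m → Bool) : Fin n → Fin m → Bool :=
  fun i j =>
    @decide ((interval I {i} {j}).Nonempty ∧
      ∀ (i' : Fin n) (j' : Fin m), (interval I {i'} {j'}).Nonempty →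
        interval I {i'} {j'} ⊆ interval I {i} {j} →
        interval I {i'} {j'} = interval I {i} {j})
      (Classical.propDecidable _)

/-- Boolean matrix product. -/
def bmul {n k m : ℕ} (A : Fin n → Fin k → Bool) (B : Fin k → Fin m → Bool) :
    Fin n → Fin m → Bool := fun i j => decide (∃ l, A i l = true ∧ B l j = true)

/-- The Boolean (Schein) rank: the least `k` admitting a Boolean factorization
with inner dimension `k`. -/
noncomputable def rankB {n m : ℕ} (M : Fin n → Fin m → Bool) : ℕ :=
  sInf {k | ∃ (A : Fin n → Fin k → Bool) (B : Fin k → Fin m → Bool), M = bmul A B}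

/-!
A factorization `E(I) = A ∘ B` with `k` factors yields `k` formal concepts of `I`: the
concept generated by the objects in each column of `A`. These concepts cover every 1-entry
`(i, j)` of `I`. Indeed, some essential entry `(i', j')` has `I_{i'j'} ⊆ I_{ij}`; it is
covered by a column `l`, and the inclusion of intervals pushes the object `i` into the
extent and the attribute `j` into the intent of the concept generated by column `l`.
-/

open Finset

section FormalConcepts

variable {n m : ℕ} {I : Fin n → Fin m → Bool}

section Polars

variable {C C' : Finset (Fin n)} {D D' : Finset (Fin m)} {i : Fin n} {j : Fin m}

@[simp]
lemma mem_up : j ∈ up I C ↔ ∀ i ∈ C, I i j = true := by simp [up]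

@[simp]
lemma mem_dn : i ∈ dn I D ↔ ∀ j ∈ D, I i j = true := by simp [dn]

lemma subset_dn_iff_subset_up : C ⊆ dn I D ↔ D ⊆ up I C := by
  simp only [subset_iff, mem_dn, mem_up]
  exact forall₂_comm

lemma up_anti (h : C ⊆ C') : up I C' ⊆ up I C := by
  intro j hj
  simp only [mem_up] at hj ⊢
  exact fun i hi => hj i (h hi)

lemma dn_anti (h : D ⊆ D') : dn I D' ⊆ dn I D := by
  intro i hi
  simp only [mem_dn] at hi ⊢
  exact fun j hj => hi j (h hj)

lemma subset_dn_up (C : Finset (Fin n)) : C ⊆ dn I (up I C) :=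
  subset_dn_iff_subset_up.2 subset_rfl

lemma subset_up_dn (D : Finset (Fin m)) : D ⊆ up I (dn I D) :=
  subset_dn_iff_subset_up.1 subset_rfl

lemma up_dn_up (C : Finset (Fin n)) : up I (dn I (up I C)) = up I C :=
  subset_antisymm (up_anti (subset_dn_up C)) (subset_up_dn _)

lemma dn_up_dn (D : Finset (Fin m)) : dn I (up I (dn I D)) = dn I D :=
  subset_antisymm (dn_anti (subset_up_dn D)) (subset_dn_up _)

end Polars

section Concepts

def generatedConcept (I : Fin n → Fin m → Bool) (C : Finset (Fin n)) :
    Finset (Fin n) × Finset (Fin m) :=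
  (dn I (up I C), up I C)

lemma isConcept_generatedConcept (C : Finset (Fin n)) : isConcept I (generatedConcept I C) :=
  ⟨up_dn_up C, rfl⟩

lemma isConcept_dn (D : Finset (Fin m)) : isConcept I (dn I D, up I (dn I D)) :=
  ⟨rfl, dn_up_dn D⟩

lemma isConcept.apply_eq_true {p : Finset (Fin n) × Finset (Fin m)} (hp : isConcept I p)
    {i : Fin n} {j : Fin m} (hi : i ∈ p.1) (hj : j ∈ p.2) : I i j = true := by
  rw [← hp.2, mem_dn] at hi
  exact hi j hj

lemma apply_eq_true_of_cov {F : Finset (Finset (Fin n) × Finset (Fin m))}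
    (hF : ∀ p ∈ F, isConcept I p) {i : Fin n} {j : Fin m} (h : cov F i j = true) :
    I i j = true := by
  obtain ⟨p, hp, hi, hj⟩ := of_decide_eq_true h
  exact (hF p hp).apply_eq_true hi hj

end Concepts

section Intervals

variable {C : Finset (Fin n)} {D : Finset (Fin m)}

lemma dn_up_subset_dn_of_interval_nonempty (h : (interval I C D).Nonempty) :
    dn I (up I C) ⊆ dn I D := by
  obtain ⟨p, -, hlow, hhigh⟩ := h
  exact hlow.trans hhigh

lemma generatedConcept_mem_interval (h : (interval I C D).Nonempty) :
    generatedConcept I C ∈ interval I C D :=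
  ⟨isConcept_generatedConcept C, subset_rfl, dn_up_subset_dn_of_interval_nonempty h⟩

lemma dn_mem_interval (h : (interval I C D).Nonempty) :
    (dn I D, up I (dn I D)) ∈ interval I C D :=
  ⟨isConcept_dn D, dn_up_subset_dn_of_interval_nonempty h, subset_rfl⟩

lemma interval_singleton_nonempty_iff {i : Fin n} {j : Fin m} :
    (interval I {i} {j}).Nonempty ↔ I i j = true := by
  constructor
  · intro h
    have hi : i ∈ dn I {j} :=
      dn_up_subset_dn_of_interval_nonempty h (subset_dn_up {i} (mem_singleton_self i))
    simpa using hi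
  · intro h
    refine ⟨generatedConcept I {i}, isConcept_generatedConcept {i}, subset_rfl, ?_⟩
    rw [generatedConcept, subset_dn_iff_subset_up, up_dn_up]
    simpa using h

variable {C' : Finset (Fin n)} {D' : Finset (Fin m)}

lemma dn_up_subset_of_interval_subset (hne : (interval I C' D').Nonempty)
    (h : interval I C' D' ⊆ interval I C D) : dn I (up I C) ⊆ dn I (up I C') :=
  (h (generatedConcept_mem_interval hne)).2.1

lemma dn_subset_of_interval_subset (hne : (interval I C' D').Nonempty)
    (h : interval I C' D' ⊆ interval I C D) : dn I D' ⊆ dn I D :=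
  (h (dn_mem_interval hne)).2.2

end Intervals

section Essential

variable {i : Fin n} {j : Fin m}

lemma ess_eq_true_iff : Ess I i j = true ↔ (interval I {i} {j}).Nonempty ∧
    ∀ (i' : Fin n) (j' : Fin m), (interval I {i'} {j'}).Nonempty →
      interval I {i'} {j'} ⊆ interval I {i} {j} → interval I {i'} {j'} = interval I {i} {j} := by
  simp [Ess]

lemma apply_eq_true_of_ess (h : Ess I i j = true) : I i j = true :=
  interval_singleton_nonempty_iff.1 (ess_eq_true_iff.1 h).1

lemma exists_ess_interval_subset (h : I i j = true) :
    ∃ i' j', Ess I i' j' = true ∧ interval I {i'} {j'} ⊆ interval I {i} {j} := by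
  let S : Set (Fin n × Fin m) := {q | (interval I {q.1} {q.2}).Nonempty ∧
    interval I {q.1} {q.2} ⊆ interval I {i} {j}}
  have hS : S.Nonempty := ⟨(i, j), interval_singleton_nonempty_iff.2 h, subset_rfl⟩
  obtain ⟨⟨i', j'⟩, ⟨hne, hsub⟩, hmin⟩ :=
    S.toFinite.exists_minimalFor (fun q => interval I {q.1} {q.2}) S hS
  refine ⟨i', j', ess_eq_true_iff.2 ⟨hne, fun a b hne' hsub' => ?_⟩, hsub⟩
  have hab : (a, b) ∈ S := ⟨hne', hsub'.trans hsub⟩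
  exact hsub'.antisymm (hmin hab hsub' :)

end Essential

section Rank

lemma rankB_le_of_eq_bmul {k : ℕ} {M : Fin n → Fin m → Bool} {A : Fin n → Fin k → Bool}
    {B : Fin k → Fin m → Bool} (h : M = bmul A B) : rankB M ≤ k :=
  Nat.sInf_le ⟨A, B, h⟩

lemma exists_eq_bmul_rankB (M : Fin n → Fin m → Bool) :
    ∃ (A : Fin n → Fin (rankB M) → Bool) (B : Fin (rankB M) → Fin m → Bool), M = bmul A B :=
  Nat.sInf_mem (s := {k | ∃ (A : Fin n → Fin k → Bool) (B : Fin k → Fin m → Bool), M = bmul A B})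
    ⟨m, M, fun l j => decide (l = j), by funext i j; simp [bmul]⟩

lemma rankB_cov_le (F : Finset (Finset (Fin n) × Finset (Fin m))) : rankB (cov F) ≤ #F := by
  let e := F.equivFin
  refine rankB_le_of_eq_bmul (A := fun i l => decide (i ∈ (e.symm l).1.1))
    (B := fun l j => decide (j ∈ (e.symm l).1.2)) ?_
  funext i j
  simp only [cov, bmul, decide_eq_true_eq, decide_eq_decide]
  constructor
  · rintro ⟨p, hp, hip, hjp⟩
    exact ⟨e ⟨p, hp⟩, by simpa using hip, by simpa using hjp⟩
  · rintro ⟨l, hil, hjl⟩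
    exact ⟨_, (e.symm l).2, hil, hjl⟩

end Rank

section Columns

variable {k : ℕ} {A : Fin n → Fin k → Bool} {B : Fin k → Fin m → Bool}

lemma exists_generatedConcept_column_mem (hAB : Ess I = bmul A B) {i : Fin n} {j : Fin m}
    (hij : I i j = true) :
    ∃ l, i ∈ (generatedConcept I {i | A i l}).1 ∧ j ∈ (generatedConcept I {i | A i l}).2 := by
  obtain ⟨i', j', hess, hsub⟩ := exists_ess_interval_subset hij
  have hne := (ess_eq_true_iff.1 hess).1
  obtain ⟨l, hAl, hBl⟩ := of_decide_eq_true (hAB ▸ hess : bmul A B i' j' = true)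
  refine ⟨l, ?_, ?_⟩
  · have hi : i ∈ dn I (up I {i'}) :=
      dn_up_subset_of_interval_subset hne hsub (subset_dn_up {i} (mem_singleton_self i))
    exact dn_anti (up_anti (by simpa using hAl)) hi
  · simp only [generatedConcept, mem_up, mem_filter, mem_univ, true_and]
    intro i'' hAl''
    -- `(i'', j')` is covered by the same factor `l`, hence essential, hence a 1-entry of `I`.
    have hess'' : Ess I i'' j' = true := hAB ▸ decide_eq_true ⟨l, hAl'', hBl⟩
    have hmem : i'' ∈ dn I {j} :=
      dn_subset_of_interval_subset hne hsub (by simpa using apply_eq_true_of_ess hess'')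
    simpa using hmem

lemma cov_image_generatedConcept_eq (hAB : Ess I = bmul A B) :
    cov (univ.image fun l => generatedConcept I {i | A i l}) = I := by
  funext i j
  refine Bool.eq_iff_iff.2 ⟨apply_eq_true_of_cov ?_, fun hij => ?_⟩
  · simp only [mem_image, mem_univ, true_and]
    rintro _ ⟨l, rfl⟩
    exact isConcept_generatedConcept _
  · obtain ⟨l, hi, hj⟩ := exists_generatedConcept_column_mem hAB hij
    exact decide_eq_true ⟨_, mem_image_of_mem _ (mem_univ l), hi, hj⟩

end Columns

end FormalConcepts

theorem rankB_le_rankB_ess {n m : ℕ} (I : Fin n → Fin m → Bool) :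
    rankB I ≤ rankB (Ess I) := by
  obtain ⟨A, B, hAB⟩ := exists_eq_bmul_rankB (Ess I)
  calc rankB I = rankB (cov (univ.image fun l => generatedConcept I {i | A i l})) := by
        rw [cov_image_generatedConcept_eq hAB]
    _ ≤ #(univ.image fun l => generatedConcept I {i | A i l}) := rankB_cov_le _
    _ ≤ rankB (Ess I) := card_image_le.trans_eq (card_fin _)
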